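/- arXiv:2603.14899 — 4 statements merged into one kernel-verified Lean document; each statement's English description precedes it below -/
import Mathlib

section
/- Base weights are dominated by matching costs within the window: with M(a,b) = (a−b)², sequences x : Fin n → ℝ, q : Fin m → ℝ, window radius ω, envelopes U_i = max_{|k−i|≤ω} q(k), L_i = min_{|k−i|≤ω} q(k), deletion cost D : ℝ → ℝ≥0, δ(a,b) = min((a−b)², D(a)), and d_i defined as δ(x_i, U_i) if x_i > U_i, δ(x_i, L_i) if x_i < L_i, else 0, then for all i, j with |i−j| ≤ ω, d_i ≤ (x_i − q_j)². -/
/-- Base weights are dominated by matching costs within the window: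
with M(a,b) = (a-b)², for all i, j with |i-j| ≤ ω, dᵢ ≤ (xᵢ - qⱼ)². -/
theorem stmt_7 (n m : ℕ) (x : Fin n → ℝ) (q : Fin m → ℝ) (ω : ℕ)
    (D : ℝ → ℝ) (hD : ∀ a, 0 ≤ D a) (i : Fin n) (j : Fin m)
    (hij : ((i : ℤ) - (j : ℤ)).natAbs ≤ ω) :
    (if x i > (Finset.univ.filter (fun k : Fin m => ((k : ℤ) - (i : ℤ)).natAbs ≤ ω)).sup'
          ⟨j, by simp only [Finset.mem_filter, Finset.mem_univ, true_and]; rw [← Int.natAbs_neg, neg_sub]; exact hij⟩ q then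
        min ((x i - (Finset.univ.filter
            (fun k : Fin m => ((k : ℤ) - (i : ℤ)).natAbs ≤ ω)).sup'
            ⟨j, by simp only [Finset.mem_filter, Finset.mem_univ, true_and]; rw [← Int.natAbs_neg, neg_sub]; exact hij⟩ q)^2) (D (x i))
     else if x i < (Finset.univ.filter
            (fun k : Fin m => ((k : ℤ) - (i : ℤ)).natAbs ≤ ω)).inf'
            ⟨j, by simp only [Finset.mem_filter, Finset.mem_univ, true_and]; rw [← Int.natAbs_neg, neg_sub]; exact hij⟩ q then
        min ((x i - (Finset.univ.filter
            (fun k : Fin m => ((k : ℤ) - (i : ℤ)).natAbs ≤ ω)).inf'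
            ⟨j, by simp only [Finset.mem_filter, Finset.mem_univ, true_and]; rw [← Int.natAbs_neg, neg_sub]; exact hij⟩ q)^2) (D (x i))
     else 0) ≤ (x i - q j)^2 := by
  have hjmem : j ∈ (Finset.univ.filter (fun k : Fin m => ((k : ℤ) - (i : ℤ)).natAbs ≤ ω)) := by
    simp only [Finset.mem_filter, Finset.mem_univ, true_and]
    rw [← Int.natAbs_neg, neg_sub]; exact hij
  set S := (Finset.univ.filter (fun k : Fin m => ((k : ℤ) - (i : ℤ)).natAbs ≤ ω)) with hS
  have hne : S.Nonempty := ⟨j, hjmem⟩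
  have hU : q j ≤ S.sup' hne q := Finset.le_sup' q hjmem
  have hL : S.inf' hne q ≤ q j := Finset.inf'_le q hjmem
  split_ifs with h1 h2
  · refine le_trans (min_le_left _ _) ?_
    have h0 : 0 ≤ x i - S.sup' hne q := by linarith
    nlinarith [hU, h0]
  · refine le_trans (min_le_left _ _) ?_
    have h0 : x i - S.inf' hne q ≤ 0 := by linarith
    nlinarith [hL, h0]
  · positivity
end

section
/- Lower-bound deletion relaxation for the DP recursion: let D(i) ≤ min over admissible j of min(Dᵥ(i,j), D_H(i,j)) and D'(j) ≤ min over admissible i of min(Dᵥ(i,j), D_H(i,j)), where D, D' are non-negative. If RAC is defined by the recursion RAC(i,j) = min(RAC(i−1,j−1) + M(i,j), RAC(i−1,j) + Dᵥ(i,j), RAC(i,j−1) + D_H(i,j)) with non-negative boundary terms, and RAC' is defined by the same recursion with Dᵥ(i,j) and D_H(i,j) replaced by D(i) and D'(j) respectively (and the same boundary costs relaxed accordingly), then RAC'(n,m) ≤ RAC(n,m). -/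
/-- Lower-bound deletion relaxation for the DP recursion: replacing each deletion
cost by a per-element lower bound can only decrease the accumulated cost. -/
theorem stmt_12 (n m : ℕ) (hn : 1 ≤ n) (hm : 1 ≤ m)
    (M DV DH : ℕ → ℕ → ℝ) (D D' : ℕ → ℝ) (RAC RAC' : ℕ → ℕ → ℝ)
    (hM : ∀ i j, 0 ≤ M i j) (hDV : ∀ i j, 0 ≤ DV i j) (hDH : ∀ i j, 0 ≤ DH i j)
    (hD0 : ∀ i, 0 ≤ D i) (hD'0 : ∀ j, 0 ≤ D' j)
    (hD : ∀ i j, 1 ≤ i → i ≤ n → 1 ≤ j → j ≤ m → D i ≤ min (DV i j) (DH i j))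
    (hD' : ∀ i j, 1 ≤ i → i ≤ n → 1 ≤ j → j ≤ m → D' j ≤ min (DV i j) (DH i j))
    (h0 : 0 ≤ RAC 1 1) (h0' : 0 ≤ RAC' 1 1) (hinit : RAC' 1 1 ≤ RAC 1 1)
    (hcol : ∀ i, 1 ≤ i → RAC (i + 1) 1 = RAC i 1 + DV (i + 1) 1)
    (hrow : ∀ j, 1 ≤ j → RAC 1 (j + 1) = RAC 1 j + DH 1 (j + 1))
    (hrec : ∀ i j, 1 ≤ i → 1 ≤ j →
      RAC (i + 1) (j + 1) =
        min (min (RAC i j + M (i + 1) (j + 1)) (RAC i (j + 1) + DV (i + 1) (j + 1)))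
          (RAC (i + 1) j + DH (i + 1) (j + 1)))
    (hcol' : ∀ i, 1 ≤ i → RAC' (i + 1) 1 = RAC' i 1 + D (i + 1))
    (hrow' : ∀ j, 1 ≤ j → RAC' 1 (j + 1) = RAC' 1 j + D' (j + 1))
    (hrec' : ∀ i j, 1 ≤ i → 1 ≤ j →
      RAC' (i + 1) (j + 1) =
        min (min (RAC' i j + M (i + 1) (j + 1)) (RAC' i (j + 1) + D (i + 1)))
          (RAC' (i + 1) j + D' (j + 1))) :
    RAC' n m ≤ RAC n m := by
  have col : ∀ i, 1 ≤ i → i ≤ n → RAC' i 1 ≤ RAC i 1 := by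
    intro i
    induction i with
    | zero => intro h; omega
    | succ i ih =>
      intro _ hin
      rcases Nat.eq_zero_or_pos i with h0i | h1i
      · subst h0i; exact hinit
      · have hDle : D (i + 1) ≤ DV (i + 1) 1 :=
          le_trans (hD (i + 1) 1 (by omega) hin le_rfl hm) (min_le_left _ _)
        rw [hcol i h1i, hcol' i h1i]
        exact add_le_add (ih h1i (by omega)) hDle
  have row : ∀ j, 1 ≤ j → j ≤ m → RAC' 1 j ≤ RAC 1 j := by
    intro j
    induction j with
    | zero => intro h; omega
    | succ j ih =>
      intro _ hjm
      rcases Nat.eq_zero_or_pos j with h0j | h1j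
      · subst h0j; exact hinit
      · have hDle : D' (j + 1) ≤ DH 1 (j + 1) :=
          le_trans (hD' 1 (j + 1) le_rfl hn (by omega) hjm) (min_le_right _ _)
        rw [hrow j h1j, hrow' j h1j]
        exact add_le_add (ih h1j (by omega)) hDle
  have key : ∀ i, 1 ≤ i → i ≤ n → ∀ j, 1 ≤ j → j ≤ m → RAC' i j ≤ RAC i j := by
    intro i
    induction i with
    | zero => intro h; omega
    | succ i ihi =>
      intro _ hin j
      rcases Nat.eq_zero_or_pos i with h0i | h1i
      · subst h0i; exact fun hj hjm => row j hj hjm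
      · induction j with
        | zero => intro h; omega
        | succ j ihj =>
          intro _ hjm
          rcases Nat.eq_zero_or_pos j with h0j | h1j
          · subst h0j; exact col (i + 1) (by omega) hin
          · have hDle : D (i + 1) ≤ DV (i + 1) (j + 1) :=
              le_trans (hD (i + 1) (j + 1) (by omega) hin (by omega) hjm) (min_le_left _ _)
            have hD'le : D' (j + 1) ≤ DH (i + 1) (j + 1) :=
              le_trans (hD' (i + 1) (j + 1) (by omega) hin (by omega) hjm) (min_le_right _ _)
            rw [hrec i j h1i h1j, hrec' i j h1i h1j]
            have h1 : RAC' i j ≤ RAC i j := ihi h1i (by omega) j h1j (by omega)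
            have h2 : RAC' i (j + 1) ≤ RAC i (j + 1) := ihi h1i (by omega) (j + 1) (by omega) hjm
            have h3 : RAC' (i + 1) j ≤ RAC (i + 1) j := ihj h1j (by omega)
            exact min_le_min (min_le_min (add_le_add h1 le_rfl) (add_le_add h2 hDle))
              (add_le_add h3 hD'le)
  exact key n hn le_rfl m hm le_rfl
end

section
/- DP cost decomposes into a sequence of match/delete operations covering all indices: for the recursion RAC(i,j) = min(RAC(i−1,j−1) + M(i,j), RAC(i−1,j) + D(i), RAC(i,j−1) + D'(j)) with boundary RAC(1,1) = M(1,1), RAC(i,1) = RAC(i−1,1) + D(i), RAC(1,j) = RAC(1,j−1) + D'(j), there exist subsets A ⊆ Fin n × Fin m (matched pairs), B ⊆ Fin n (deleted indices of the first sequence), C ⊆ Fin m (deleted indices of the second sequence) such that every i ∈ Fin n is in B or appears as a first coordinate in A, every j ∈ Fin m is in C or appears as a second coordinate in A, and RAC(n,m) = ∑_{(i,j)∈A} M(i,j) + ∑_{i∈B} D(i) + ∑_{j∈C} D'(j). -/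
lemma stmt_13_aux (M : ℕ → ℕ → ℝ) (D D' : ℕ → ℝ) (RAC : ℕ → ℕ → ℝ)
    (hinit : RAC 1 1 = M 1 1)
    (hcol : ∀ i, 1 ≤ i → RAC (i + 1) 1 = RAC i 1 + D (i + 1))
    (hrow : ∀ j, 1 ≤ j → RAC 1 (j + 1) = RAC 1 j + D' (j + 1))
    (hrec : ∀ i j, 1 ≤ i → 1 ≤ j →
      RAC (i + 1) (j + 1) =
        min (min (RAC i j + M (i + 1) (j + 1)) (RAC i (j + 1) + D (i + 1)))
          (RAC (i + 1) j + D' (j + 1))) :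
    ∀ N n m, n + m ≤ N → 1 ≤ n → 1 ≤ m →
    ∃ (A : Finset (ℕ × ℕ)) (B C : Finset ℕ),
      A ⊆ Finset.Icc 1 n ×ˢ Finset.Icc 1 m ∧
      B ⊆ Finset.Icc 1 n ∧ C ⊆ Finset.Icc 1 m ∧
      (∀ i ∈ Finset.Icc 1 n, i ∈ B ∨ ∃ j, (i, j) ∈ A) ∧
      (∀ j ∈ Finset.Icc 1 m, j ∈ C ∨ ∃ i, (i, j) ∈ A) ∧
      RAC n m = ∑ p ∈ A, M p.1 p.2 + ∑ i ∈ B, D i + ∑ j ∈ C, D' j := by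
  intro N
  induction N with
  | zero => intro n m h hn hm; omega
  | succ N ih =>
    intro n m h hn hm
    match n, m, hn, hm with
    | 1, 1, _, _ =>
      exact ⟨{(1,1)}, ∅, ∅, by simp, by simp, by simp, by simp, by simp, by simp [hinit]⟩
    | 1, j+2, _, _ =>
      obtain ⟨A, B, C, hA, hB, hC, hcov1, hcov2, hsum⟩ :=
        ih 1 (j+1) (by omega) (by omega) (by omega)
      have hjC : j + 2 ∉ C := fun hx => by
        have := hC hx; simp [Finset.mem_Icc] at this
      refine ⟨A, B, insert (j+2) C, ?_, hB, ?_, hcov1, ?_, ?_⟩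
      · exact hA.trans (Finset.product_subset_product_right
          (Finset.Icc_subset_Icc_right (by omega)))
      · intro x hx
        rcases Finset.mem_insert.mp hx with h' | h'
        · simp [Finset.mem_Icc, h']
        · have := hC h'; simp [Finset.mem_Icc] at this ⊢; omega
      · intro k hk
        simp [Finset.mem_Icc] at hk
        by_cases hk2 : k = j + 2
        · exact Or.inl (Finset.mem_insert.mpr (Or.inl hk2))
        · rcases hcov2 k (by simp [Finset.mem_Icc]; omega) with h' | h'
          · exact Or.inl (Finset.mem_insert.mpr (Or.inr h'))
          · exact Or.inr h'
      · rw [hrow (j+1) (by omega), hsum, Finset.sum_insert hjC]; ring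
    | i+2, 1, _, _ =>
      obtain ⟨A, B, C, hA, hB, hC, hcov1, hcov2, hsum⟩ :=
        ih (i+1) 1 (by omega) (by omega) (by omega)
      have hiB : i + 2 ∉ B := fun hx => by
        have := hB hx; simp [Finset.mem_Icc] at this
      refine ⟨A, insert (i+2) B, C, ?_, ?_, hC, ?_, hcov2, ?_⟩
      · exact hA.trans (Finset.product_subset_product_left
          (Finset.Icc_subset_Icc_right (by omega)))
      · intro x hx
        rcases Finset.mem_insert.mp hx with h' | h'
        · simp [Finset.mem_Icc, h']
        · have := hB h'; simp [Finset.mem_Icc] at this ⊢; omega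
      · intro k hk
        simp [Finset.mem_Icc] at hk
        by_cases hk2 : k = i + 2
        · exact Or.inl (Finset.mem_insert.mpr (Or.inl hk2))
        · rcases hcov1 k (by simp [Finset.mem_Icc]; omega) with h' | h'
          · exact Or.inl (Finset.mem_insert.mpr (Or.inr h'))
          · exact Or.inr h'
      · rw [hcol (i+1) (by omega), hsum, Finset.sum_insert hiB]; ring
    | i+2, j+2, _, _ =>
      have hr := hrec (i+1) (j+1) (by omega) (by omega)
      rcases min_cases (min (RAC (i+1) (j+1) + M (i+2) (j+2))
          (RAC (i+1) (j+2) + D (i+2))) (RAC (i+2) (j+1) + D' (j+2)) with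
        ⟨hmin, _⟩ | ⟨hmin, _⟩
      · rcases min_cases (RAC (i+1) (j+1) + M (i+2) (j+2))
            (RAC (i+1) (j+2) + D (i+2)) with ⟨hmin2, _⟩ | ⟨hmin2, _⟩
        · -- match case
          obtain ⟨A, B, C, hA, hB, hC, hcov1, hcov2, hsum⟩ :=
            ih (i+1) (j+1) (by omega) (by omega) (by omega)
          have hnA : ((i+2 : ℕ), (j+2 : ℕ)) ∉ A := fun hx => by
            have := hA hx; simp [Finset.mem_Icc] at this
          refine ⟨insert (i+2, j+2) A, B, C, ?_, ?_, ?_, ?_, ?_, ?_⟩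
          · intro p hp
            rcases Finset.mem_insert.mp hp with h' | h'
            · simp [h', Finset.mem_Icc]
            · have := hA h'; simp [Finset.mem_Icc] at this ⊢; omega
          · exact hB.trans (Finset.Icc_subset_Icc_right (by omega))
          · exact hC.trans (Finset.Icc_subset_Icc_right (by omega))
          · intro k hk
            simp [Finset.mem_Icc] at hk
            by_cases hk2 : k = i + 2
            · exact Or.inr ⟨j+2, Finset.mem_insert.mpr (Or.inl (by rw [hk2]))⟩
            · rcases hcov1 k (by simp [Finset.mem_Icc]; omega) with h' | ⟨l, hl⟩
              · exact Or.inl h'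
              · exact Or.inr ⟨l, Finset.mem_insert.mpr (Or.inr hl)⟩
          · intro k hk
            simp [Finset.mem_Icc] at hk
            by_cases hk2 : k = j + 2
            · exact Or.inr ⟨i+2, Finset.mem_insert.mpr (Or.inl (by rw [hk2]))⟩
            · rcases hcov2 k (by simp [Finset.mem_Icc]; omega) with h' | ⟨l, hl⟩
              · exact Or.inl h'
              · exact Or.inr ⟨l, Finset.mem_insert.mpr (Or.inr hl)⟩
          · rw [hr, hmin, hmin2, hsum, Finset.sum_insert hnA]; ring
        · -- delete row case
          obtain ⟨A, B, C, hA, hB, hC, hcov1, hcov2, hsum⟩ :=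
            ih (i+1) (j+2) (by omega) (by omega) (by omega)
          have hiB : i + 2 ∉ B := fun hx => by
            have := hB hx; simp [Finset.mem_Icc] at this
          refine ⟨A, insert (i+2) B, C, ?_, ?_, hC, ?_, hcov2, ?_⟩
          · exact hA.trans (Finset.product_subset_product_left
              (Finset.Icc_subset_Icc_right (by omega)))
          · intro x hx
            rcases Finset.mem_insert.mp hx with h' | h'
            · simp [Finset.mem_Icc, h']
            · have := hB h'; simp [Finset.mem_Icc] at this ⊢; omega
          · intro k hk
            simp [Finset.mem_Icc] at hk
            by_cases hk2 : k = i + 2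
            · exact Or.inl (Finset.mem_insert.mpr (Or.inl hk2))
            · rcases hcov1 k (by simp [Finset.mem_Icc]; omega) with h' | h'
              · exact Or.inl (Finset.mem_insert.mpr (Or.inr h'))
              · exact Or.inr h'
          · rw [hr, hmin, hmin2, hsum, Finset.sum_insert hiB]; ring
      · -- delete column case
        obtain ⟨A, B, C, hA, hB, hC, hcov1, hcov2, hsum⟩ :=
          ih (i+2) (j+1) (by omega) (by omega) (by omega)
        have hjC : j + 2 ∉ C := fun hx => by
          have := hC hx; simp [Finset.mem_Icc] at this
        refine ⟨A, B, insert (j+2) C, ?_, hB, ?_, hcov1, ?_, ?_⟩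
        · exact hA.trans (Finset.product_subset_product_right
            (Finset.Icc_subset_Icc_right (by omega)))
        · intro x hx
          rcases Finset.mem_insert.mp hx with h' | h'
          · simp [Finset.mem_Icc, h']
          · have := hC h'; simp [Finset.mem_Icc] at this ⊢; omega
        · intro k hk
          simp [Finset.mem_Icc] at hk
          by_cases hk2 : k = j + 2
          · exact Or.inl (Finset.mem_insert.mpr (Or.inl hk2))
          · rcases hcov2 k (by simp [Finset.mem_Icc]; omega) with h' | h'
            · exact Or.inl (Finset.mem_insert.mpr (Or.inr h'))
            · exact Or.inr h'
        · rw [hr, hmin, hsum, Finset.sum_insert hjC]; ring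

/-- The DP cost decomposes into a set of match/delete operations covering all
indices of both sequences (Corollary 1). -/
theorem stmt_13 (n m : ℕ) (hn : 1 ≤ n) (hm : 1 ≤ m)
    (M : ℕ → ℕ → ℝ) (D D' : ℕ → ℝ) (RAC : ℕ → ℕ → ℝ)
    (hM : ∀ i j, 0 ≤ M i j) (hD : ∀ i, 0 ≤ D i) (hD' : ∀ j, 0 ≤ D' j)
    (hinit : RAC 1 1 = M 1 1)
    (hcol : ∀ i, 1 ≤ i → RAC (i + 1) 1 = RAC i 1 + D (i + 1))
    (hrow : ∀ j, 1 ≤ j → RAC 1 (j + 1) = RAC 1 j + D' (j + 1))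
    (hrec : ∀ i j, 1 ≤ i → 1 ≤ j →
      RAC (i + 1) (j + 1) =
        min (min (RAC i j + M (i + 1) (j + 1)) (RAC i (j + 1) + D (i + 1)))
          (RAC (i + 1) j + D' (j + 1))) :
    ∃ (A : Finset (ℕ × ℕ)) (B C : Finset ℕ),
      A ⊆ Finset.Icc 1 n ×ˢ Finset.Icc 1 m ∧
      B ⊆ Finset.Icc 1 n ∧ C ⊆ Finset.Icc 1 m ∧
      (∀ i ∈ Finset.Icc 1 n, i ∈ B ∨ ∃ j, (i, j) ∈ A) ∧
      (∀ j ∈ Finset.Icc 1 m, j ∈ C ∨ ∃ i, (i, j) ∈ A) ∧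
      RAC n m = ∑ p ∈ A, M p.1 p.2 + ∑ i ∈ B, D i + ∑ j ∈ C, D' j :=
  stmt_13_aux M D D' RAC hinit hcol hrow hrec (n + m) n m le_rfl hn hm
end

section
/- Combining the coverage decomposition with dual feasibility yields the bipartite-graph lower bound: suppose there exist sets A ⊆ Fin n × Fin m, B ⊆ Fin n, C ⊆ Fin m covering all indices (each i ∈ Fin n appears in B or as a first coordinate of A; each j ∈ Fin m appears in C or as a second coordinate of A), and let d : Fin n → ℝ≥0, d' : Fin m → ℝ≥0 satisfy d(i) + d'(j) ≤ M(i,j) for all (i,j) ∈ A, d(i) ≤ D(i) for all i, and d'(j) ≤ D'(j) for all j. Then ∑_i d(i) + ∑_j d'(j) ≤ ∑_{(i,j)∈A} M(i,j) + ∑_{i∈B} D(i) + ∑_{j∈C} D'(j). -/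
lemma sum_image_le' {α β : Type*} [DecidableEq α] [DecidableEq β] (s : Finset α) (g : α → β) (f : β → ℝ)
    (hf : ∀ b, 0 ≤ f b) : ∑ b ∈ s.image g, f b ≤ ∑ a ∈ s, f (g a) := by
  induction s using Finset.induction with
  | empty => simp
  | insert _ _ h ih =>
    rename_i a s
    rw [Finset.image_insert, Finset.sum_insert h]
    by_cases hg : g a ∈ s.image g
    · rw [Finset.insert_eq_self.2 hg]
      have := hf (g a)
      linarith
    · rw [Finset.sum_insert hg]
      linarith

lemma sum_union_le'' {α : Type*} [DecidableEq α] (s t : Finset α) (f : α → ℝ)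
    (hf : ∀ a, 0 ≤ f a) : ∑ a ∈ s ∪ t, f a ≤ ∑ a ∈ s, f a + ∑ a ∈ t, f a := by
  have := Finset.sum_union_inter (s₁ := s) (s₂ := t) (f := f)
  have h2 : 0 ≤ ∑ a ∈ s ∩ t, f a := Finset.sum_nonneg fun a _ => hf a
  linarith

/-- Coverage plus dual feasibility yields the bipartite-graph lower bound. -/
theorem stmt_14 (n m : ℕ) (M : Fin n → Fin m → ℝ) (D : Fin n → ℝ) (D' : Fin m → ℝ)
    (hM : ∀ i j, 0 ≤ M i j) (hD : ∀ i, 0 ≤ D i) (hD' : ∀ j, 0 ≤ D' j)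
    (A : Finset (Fin n × Fin m)) (B : Finset (Fin n)) (C : Finset (Fin m))
    (hcovX : ∀ i : Fin n, i ∈ B ∨ ∃ j, (i, j) ∈ A)
    (hcovQ : ∀ j : Fin m, j ∈ C ∨ ∃ i, (i, j) ∈ A)
    (d : Fin n → ℝ) (d' : Fin m → ℝ)
    (hd : ∀ i, 0 ≤ d i) (hd' : ∀ j, 0 ≤ d' j)
    (hmatch : ∀ p ∈ A, d p.1 + d' p.2 ≤ M p.1 p.2)
    (hdelX : ∀ i, d i ≤ D i) (hdelQ : ∀ j, d' j ≤ D' j) :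
    ∑ i, d i + ∑ j, d' j ≤
      ∑ p ∈ A, M p.1 p.2 + ∑ i ∈ B, D i + ∑ j ∈ C, D' j := by
  have h1 : ∑ i, d i ≤ ∑ i ∈ B, d i + ∑ i ∈ A.image Prod.fst, d i := by
    refine le_trans ?_ (sum_union_le'' _ _ _ hd)
    apply Finset.sum_le_sum_of_subset_of_nonneg
    · intro i _
      rcases hcovX i with h | ⟨j, hj⟩
      · exact Finset.mem_union_left _ h
      · exact Finset.mem_union_right _ (Finset.mem_image.2 ⟨(i, j), hj, rfl⟩)
    · exact fun i _ _ => hd i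
  have h2 : ∑ j, d' j ≤ ∑ j ∈ C, d' j + ∑ j ∈ A.image Prod.snd, d' j := by
    refine le_trans ?_ (sum_union_le'' _ _ _ hd')
    apply Finset.sum_le_sum_of_subset_of_nonneg
    · intro j _
      rcases hcovQ j with h | ⟨i, hi⟩
      · exact Finset.mem_union_left _ h
      · exact Finset.mem_union_right _ (Finset.mem_image.2 ⟨(i, j), hi, rfl⟩)
    · exact fun j _ _ => hd' j
  have h3 : ∑ i ∈ A.image Prod.fst, d i ≤ ∑ p ∈ A, d p.1 :=
    sum_image_le' _ _ _ hd
  have h4 : ∑ j ∈ A.image Prod.snd, d' j ≤ ∑ p ∈ A, d' p.2 :=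
    sum_image_le' _ _ _ hd'
  have h5 : ∑ p ∈ A, d p.1 + ∑ p ∈ A, d' p.2 ≤ ∑ p ∈ A, M p.1 p.2 := by
    rw [← Finset.sum_add_distrib]
    exact Finset.sum_le_sum hmatch
  have h6 : ∑ i ∈ B, d i ≤ ∑ i ∈ B, D i := Finset.sum_le_sum fun i _ => hdelX i
  have h7 : ∑ j ∈ C, d' j ≤ ∑ j ∈ C, D' j := Finset.sum_le_sum fun j _ => hdelQ j
  linarith
end
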